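/- arXiv:2602.12436 — 8 statements merged into one kernel-verified Lean document; each statement's English description precedes it below -/
import Mathlib

section
/- If a system admits an interpolation-inspired barrier certificate, i.e. a finite family of functions B_0,…,B_k : X → ℝ with B_0 nonpositive on initial states, B_i(x) ≤ 0 implying B_{i+1}(x') ≤ 0 for all transitions x' ∈ f(x) and all i < k, B_k(x) ≤ 0 implying B_k(x') ≤ 0 for all transitions, and each B_i positive on the unsafe set, then the system is safe. -/
/-- Interpolation-inspired barrier certificates imply safety. -/
theorem ibc_implies_safety {X : Type*} (f : X → Set X) (X0 Xu : Set X)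
    (k : ℕ) (B : ℕ → X → ℝ)
    (h1 : ∀ x0 ∈ X0, B 0 x0 ≤ 0)
    (h2 : ∀ i < k, ∀ x : X, ∀ x' ∈ f x, B i x ≤ 0 → B (i + 1) x' ≤ 0)
    (h3 : ∀ x : X, ∀ x' ∈ f x, B k x ≤ 0 → B k x' ≤ 0)
    (h4 : ∀ i ≤ k, ∀ xu ∈ Xu, 0 < B i xu) :
    ∀ x : ℕ → X, x 0 ∈ X0 → (∀ t, x (t + 1) ∈ f (x t)) →
      ∀ t ≥ 1, x t ∉ Xu := by
  intro x hx0 hstep t _ hu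
  have key : ∀ s, B (min s k) (x s) ≤ 0 := by
    intro s
    induction s with
    | zero => simpa using h1 _ hx0
    | succ n ih =>
      rcases lt_or_ge n k with h | h
      · have h1' : min n k = n := min_eq_left h.le
        have h2' : min (n+1) k = n+1 := min_eq_left h
        rw [h2']
        rw [h1'] at ih; exact h2 n h _ _ (hstep n) ih
      · have h1' : min n k = k := min_eq_right h
        have h2' : min (n+1) k = k := min_eq_right (h.trans (Nat.le_succ n))
        rw [h2']
        rw [h1'] at ih; exact h3 _ _ (hstep n) ih
  exact absurd (key t) (not_le.mpr (h4 _ (min_le_right t k) _ hu))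
end

section
/- If there exists a closure certificate T : X × X → ℝ and η > 0 such that (1) T(x, x') ≥ 0 for every transition x' ∈ f(x), (2) T(x', y) ≥ 0 implies T(x, y) ≥ 0 for all x, y ∈ X and x' ∈ f(x), and (3) T(x0, xu) ≤ −η for all initial x0 and unsafe xu, then no trajectory from an initial state ever reaches an unsafe state. -/
/-- Closure certificates imply safety. -/
theorem cc_implies_safety {X : Type*} (f : X → Set X) (X0 Xu : Set X)
    (hdisj : Disjoint X0 Xu) (T : X → X → ℝ) (η : ℝ) (hη : 0 < η)
    (h1 : ∀ x : X, ∀ x' ∈ f x, 0 ≤ T x x')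
    (h2 : ∀ x y : X, ∀ x' ∈ f x, 0 ≤ T x' y → 0 ≤ T x y)
    (h3 : ∀ x0 ∈ X0, ∀ xu ∈ Xu, T x0 xu ≤ -η) :
    ∀ x : ℕ → X, x 0 ∈ X0 → (∀ t, x (t + 1) ∈ f (x t)) →
      ∀ t ≥ 1, x t ∉ Xu := by
  intro x hx0 hstep t ht hu
  have key : ∀ n s : ℕ, 0 ≤ T (x s) (x (s + n + 1)) := by
    intro n
    induction n with
    | zero => intro s; exact h1 _ _ (hstep s)
    | succ n ih =>
      intro s
      have := ih (s + 1)
      have h' : 0 ≤ T (x (s + 1)) (x (s + (n + 1) + 1)) := by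
        convert this using 3; omega
      exact h2 _ _ _ (hstep s) h'
  obtain ⟨n, rfl⟩ : ∃ n, t = 0 + n + 1 := ⟨t - 1, by omega⟩
  have := key n 0
  have := h3 _ hx0 _ hu
  linarith
end

section
/- Suppose T : X × X → ℝ satisfies the closure certificate conditions for safety: T(x,x') ≥ 0 for all transitions, and T(x',y) ≥ 0 implies T(x,y) ≥ 0 for all transitions x' ∈ f(x) and all y. Then for any trajectory x : ℕ → X and any indices i < j, we have T(x i, x j) ≥ 0; i.e., T is nonnegative on every pair of states where the second is reachable from the first along the trajectory. -/
/-- A closure certificate is nonnegative on all reachable pairs along a trajectory. -/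
theorem cc_nonneg_on_reachable_pairs {X : Type*} (f : X → Set X) (T : X → X → ℝ)
    (h1 : ∀ x : X, ∀ x' ∈ f x, 0 ≤ T x x')
    (h2 : ∀ x y : X, ∀ x' ∈ f x, 0 ≤ T x' y → 0 ≤ T x y) :
    ∀ x : ℕ → X, (∀ t, x (t + 1) ∈ f (x t)) →
      ∀ i j : ℕ, i < j → 0 ≤ T (x i) (x j) := by
  intro x hx i j hij
  obtain ⟨d, rfl⟩ : ∃ d, j = i + d + 1 := ⟨j - i - 1, by omega⟩
  clear hij
  induction d generalizing i with
  | zero => exact h1 _ _ (hx i)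
  | succ n ih =>
    exact h2 _ _ _ (hx i) (by have := ih (i + 1); simpa [Nat.add_assoc, Nat.add_comm, Nat.add_left_comm] using this)
end

section
/- If a system admits an interpolation-inspired closure certificate for safety, i.e. a family T_0,…,T_k : X × X → ℝ and η > 0 with T_0(x,x') ≥ 0 on transitions, T_i(x',y) ≥ 0 implying T_{i+1}(x,y) ≥ 0 for i < k, T_k(x',y) ≥ 0 implying T_k(x,y) ≥ 0, and T_i(x0,xu) ≤ −η for all i, all initial x0 and unsafe xu, then the system is safe. -/
/-- Interpolation-inspired closure certificates imply safety. -/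
theorem icc_implies_safety {X : Type*} (f : X → Set X) (X0 Xu : Set X)
    (hdisj : Disjoint X0 Xu) (k : ℕ) (T : ℕ → X → X → ℝ) (η : ℝ) (hη : 0 < η)
    (h1 : ∀ x : X, ∀ x' ∈ f x, 0 ≤ T 0 x x')
    (h2 : ∀ i < k, ∀ x y : X, ∀ x' ∈ f x, 0 ≤ T i x' y → 0 ≤ T (i + 1) x y)
    (h3 : ∀ x y : X, ∀ x' ∈ f x, 0 ≤ T k x' y → 0 ≤ T k x y)
    (h4 : ∀ i ≤ k, ∀ x0 ∈ X0, ∀ xu ∈ Xu, T i x0 xu ≤ -η) :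
    ∀ x : ℕ → X, x 0 ∈ X0 → (∀ t, x (t + 1) ∈ f (x t)) →
      ∀ t ≥ 1, x t ∉ Xu := by
  intro x hx0 hstep t ht hxu
  obtain ⟨s, rfl⟩ : ∃ s, t = s + 1 := ⟨t - 1, by omega⟩
  have key : ∀ j ≤ s, 0 ≤ T (min j k) (x (s - j)) (x (s + 1)) := by
    intro j
    induction j with
    | zero => intro _; simpa using h1 (x s) (x (s + 1)) (hstep s)
    | succ j ih =>
      intro hj
      have ihj := ih (by omega)
      have hmem : x (s - j) ∈ f (x (s - (j + 1))) := by
        have h : s - (j + 1) + 1 = s - j := by omega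
        rw [← h]; exact hstep _
      rcases lt_or_ge j k with hk | hk
      · have := h2 j hk (x (s - (j + 1))) (x (s + 1)) (x (s - j)) hmem
          (by simpa [Nat.min_eq_left hk.le] using ihj)
        simpa [Nat.min_eq_left hk] using this
      · have := h3 (x (s - (j + 1))) (x (s + 1)) (x (s - j)) hmem
          (by simpa [Nat.min_eq_right hk] using ihj)
        simpa [Nat.min_eq_right (by omega : k ≤ j + 1)] using this
  have hkey := key s le_rfl
  rw [Nat.sub_self] at hkey
  have hle := h4 (min s k) (min_le_right s k) (x 0) hx0 (x (s + 1)) hxu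
  linarith
end

section
/- Given an interpolation-inspired barrier certificate B_0,…,B_{k_b} for a system with unsafe set Xu disjoint from X0, the functions T_i : X × X → ℝ defined for 0 ≤ i ≤ k_b − 1 by T_i(x,y) = 0 if for all 0 ≤ ℓ ≤ k_b (with m = min(k_b, ℓ + i + 1)) either B_ℓ(x) > 0 or B_m(y) ≤ 0, and T_i(x,y) = −η otherwise (for any fixed η > 0), form an interpolation-inspired closure certificate for safety with parameter k_b − 1. -/
open Classical in
/-- From an IBC with parameter `kb ≥ 1` one can construct an ICC for safety with
parameter `kb - 1`. -/
theorem ibc_to_icc {X : Type*} (f : X → Set X) (X0 Xu : Set X)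
    (hdisj : Disjoint X0 Xu) (kb : ℕ) (hkb : 1 ≤ kb) (B : ℕ → X → ℝ)
    (hB1 : ∀ x0 ∈ X0, B 0 x0 ≤ 0)
    (hB2 : ∀ i < kb, ∀ x : X, ∀ x' ∈ f x, B i x ≤ 0 → B (i + 1) x' ≤ 0)
    (hB3 : ∀ x : X, ∀ x' ∈ f x, B kb x ≤ 0 → B kb x' ≤ 0)
    (hB4 : ∀ i ≤ kb, ∀ xu ∈ Xu, 0 < B i xu)
    (η : ℝ) (hη : 0 < η) :
    let T : ℕ → X → X → ℝ := fun i x y =>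
      if ∀ ℓ ≤ kb, 0 < B ℓ x ∨ B (min kb (ℓ + i + 1)) y ≤ 0 then 0 else -η
    (∀ x : X, ∀ x' ∈ f x, 0 ≤ T 0 x x') ∧
    (∀ i < kb - 1, ∀ x y : X, ∀ x' ∈ f x, 0 ≤ T i x' y → 0 ≤ T (i + 1) x y) ∧
    (∀ x y : X, ∀ x' ∈ f x, 0 ≤ T (kb - 1) x' y → 0 ≤ T (kb - 1) x y) ∧
    (∀ i ≤ kb - 1, ∀ x0 ∈ X0, ∀ xu ∈ Xu, T i x0 xu ≤ -η) := by
  intro T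
  have hT : ∀ i x y, 0 ≤ T i x y ↔
      ∀ ℓ ≤ kb, 0 < B ℓ x ∨ B (min kb (ℓ + i + 1)) y ≤ 0 := by
    intro i x y
    by_cases h : ∀ ℓ ≤ kb, 0 < B ℓ x ∨ B (min kb (ℓ + i + 1)) y ≤ 0
    · simp only [T, if_pos h]
      exact iff_of_true le_rfl h
    · simp only [T, if_neg h]
      exact iff_of_false (by linarith) h
  refine ⟨?_, ?_, ?_, ?_⟩
  · intro x x' hx'
    refine (hT 0 x x').mpr fun ℓ hℓ => ?_
    rcases lt_or_ge 0 (B ℓ x) with h | h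
    · exact Or.inl h
    · right
      rcases lt_or_eq_of_le hℓ with h' | h'
      · have hmin : min kb (ℓ + 0 + 1) = ℓ + 1 := by omega
        rw [hmin]
        exact hB2 ℓ h' x x' hx' h
      · have hmin : min kb (ℓ + 0 + 1) = kb := by omega
        rw [hmin]; rw [h'] at h
        exact hB3 x x' hx' h
  · intro i hi x y x' hx' hT'
    replace hT' := (hT i x' y).mp hT'
    refine (hT (i + 1) x y).mpr fun ℓ hℓ => ?_
    rcases lt_or_ge 0 (B ℓ x) with h | h
    · exact Or.inl h
    · right
      rcases lt_or_eq_of_le hℓ with h' | h'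
      · have hB : B (ℓ + 1) x' ≤ 0 := hB2 ℓ h' x x' hx' h
        rcases hT' (ℓ + 1) (by omega) with h'' | h''
        · linarith
        · have hmin : min kb (ℓ + 1 + i + 1) = min kb (ℓ + (i + 1) + 1) := by omega
          rwa [hmin] at h''
      · rw [h'] at h
        have hB : B kb x' ≤ 0 := hB3 x x' hx' h
        rw [h']
        rcases hT' kb le_rfl with h'' | h''
        · linarith
        · have hmin1 : min kb (kb + i + 1) = kb := by omega
          have hmin2 : min kb (kb + (i + 1) + 1) = kb := by omega
          rw [hmin1] at h''
          rw [hmin2]; exact h''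
  · intro x y x' hx' hT'
    replace hT' := (hT (kb - 1) x' y).mp hT'
    refine (hT (kb - 1) x y).mpr fun ℓ hℓ => ?_
    rcases lt_or_ge 0 (B ℓ x) with h | h
    · exact Or.inl h
    · right
      rcases lt_or_eq_of_le hℓ with h' | h'
      · have hB : B (ℓ + 1) x' ≤ 0 := hB2 ℓ h' x x' hx' h
        rcases hT' (ℓ + 1) (by omega) with h'' | h''
        · linarith
        · have hmin1 : min kb (ℓ + 1 + (kb - 1) + 1) = kb := by omega
          have hmin2 : min kb (ℓ + (kb - 1) + 1) = kb := by omega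
          rw [hmin1] at h''
          rw [hmin2]; exact h''
      · rw [h'] at h
        have hB : B kb x' ≤ 0 := hB3 x x' hx' h
        rw [h']
        rcases hT' kb le_rfl with h'' | h''
        · linarith
        · have hmin1 : min kb (kb + (kb - 1) + 1) = kb := by omega
          rw [hmin1] at h'' ⊢
          exact h''
  · intro i hi x0 hx0 xu hxu
    have hcond : ¬ ∀ ℓ ≤ kb, 0 < B ℓ x0 ∨ B (min kb (ℓ + i + 1)) xu ≤ 0 := by
      intro h
      rcases h 0 (by omega) with h' | h'
      · exact absurd (hB1 x0 hx0) (not_le.mpr h')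
      · exact absurd h' (not_le.mpr (hB4 _ (by omega) xu hxu))
    simp only [T, if_neg hcond, le_refl]
end

section
/- If there exists a closure certificate for persistence, i.e. T : X × X → ℝ and η > 0 with (1) T(x,x') ≥ 0 on transitions, (2) T(x',y) ≥ 0 implying T(x,y) ≥ 0 for transitions x' ∈ f(x), and (3) for all initial x0 and y', y'' ∈ X_VF: T(x0,y') ≥ 0 and T(y',y'') ≥ 0 imply T(x0,y'') ≤ T(x0,y') − η, then every trajectory of the system visits the set X_VF only finitely often. -/
/-- Closure certificates imply persistence: every trajectory visits `XVF`
only finitely often. -/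
theorem cc_implies_persistence {X : Type*} (f : X → Set X) (X0 XVF : Set X)
    (T : X → X → ℝ) (η : ℝ) (hη : 0 < η)
    (h1 : ∀ x : X, ∀ x' ∈ f x, 0 ≤ T x x')
    (h2 : ∀ x y : X, ∀ x' ∈ f x, 0 ≤ T x' y → 0 ≤ T x y)
    (h3 : ∀ x0 ∈ X0, ∀ y' ∈ XVF, ∀ y'' ∈ XVF,
      0 ≤ T x0 y' → 0 ≤ T y' y'' → T x0 y'' ≤ T x0 y' - η) :
    ∀ x : ℕ → X, x 0 ∈ X0 → (∀ t, x (t + 1) ∈ f (x t)) →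
      ∃ i : ℕ, ∀ j ≥ i, x j ∉ XVF := by
  intro x hx0 hstep
  by_contra h
  push_neg at h
  -- key: T is nonneg along strictly increasing pairs of times
  have key : ∀ k i : ℕ, 0 ≤ T (x i) (x (i + k + 1)) := by
    intro k
    induction k with
    | zero => intro i; exact h1 _ _ (hstep i)
    | succ k ih =>
      intro i
      apply h2 _ _ _ (hstep i)
      have := ih (i + 1)
      have he : i + 1 + k + 1 = i + (k + 1) + 1 := by ring
      rwa [he] at this
  have key' : ∀ i j : ℕ, i < j → 0 ≤ T (x i) (x j) := by
    intro i j hij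
    obtain ⟨k, rfl⟩ : ∃ k, j = i + k + 1 := ⟨j - i - 1, by omega⟩
    exact key _ i
  choose g hg1 hg2 using h
  set t : ℕ → ℕ := fun k => Nat.rec (g 1) (fun _ tk => g (tk + 1)) k with ht
  have ht0 : t 0 = g 1 := rfl
  have htS : ∀ k, t (k + 1) = g (t k + 1) := fun k => rfl
  have htpos : ∀ k, 1 ≤ t k := by
    intro k
    cases k with
    | zero => exact hg1 1
    | succ k => have := hg1 (t k + 1); rw [htS]; omega
  have htmono : ∀ k, t k < t (k + 1) := by
    intro k; have := hg1 (t k + 1); rw [htS]; omega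
  have htmem : ∀ k, x (t k) ∈ XVF := by
    intro k
    cases k with
    | zero => exact hg2 1
    | succ k => rw [htS]; exact hg2 (t k + 1)
  have hnn : ∀ k, 0 ≤ T (x 0) (x (t k)) := fun k => key' 0 (t k) (htpos k)
  have hdec : ∀ k, T (x 0) (x (t (k + 1))) ≤ T (x 0) (x (t k)) - η := by
    intro k
    exact h3 (x 0) hx0 (x (t k)) (htmem k) (x (t (k + 1))) (htmem (k + 1))
      (hnn k) (key' (t k) (t (k + 1)) (htmono k))
  have hbound : ∀ k : ℕ, T (x 0) (x (t k)) ≤ T (x 0) (x (t 0)) - k * η := by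
    intro k
    induction k with
    | zero => simp
    | succ k ih =>
      have := hdec k
      push_cast
      nlinarith
  obtain ⟨n, hn⟩ := exists_nat_gt (T (x 0) (x (t 0)) / η)
  have h1' := hbound n
  have h2' := hnn n
  have : (n : ℝ) * η > T (x 0) (x (t 0)) := by
    rw [gt_iff_lt, ← div_lt_iff₀ hη] at *
    exact hn
  linarith
end

section
/- If a system admits an interpolation-inspired closure certificate for persistence — functions T_0,…,T_k : X × X → ℝ and η > 0 with T_0(x,x') ≥ 0 on transitions, T_i(x',y) ≥ 0 implying T_{i+1}(x,y) ≥ 0 for i < k, T_k(x',y) ≥ 0 implying T_k(x,y) ≥ 0, and, for initial x0 and y',y'' ∈ X_VF, T_k(x0,y') ≥ 0 ∧ T_k(y',y'') ≥ 0 implying T_k(x0,y'') ≤ T_k(x0,y') − η — then every trajectory visits X_VF only finitely often. -/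
/-- Interpolation-inspired closure certificates imply persistence. -/
theorem icc_implies_persistence {X : Type*} (f : X → Set X) (X0 XVF : Set X)
    (k : ℕ) (T : ℕ → X → X → ℝ) (η : ℝ) (hη : 0 < η)
    (h1 : ∀ x : X, ∀ x' ∈ f x, 0 ≤ T 0 x x')
    (h2 : ∀ i < k, ∀ x y : X, ∀ x' ∈ f x, 0 ≤ T i x' y → 0 ≤ T (i + 1) x y)
    (h3 : ∀ x y : X, ∀ x' ∈ f x, 0 ≤ T k x' y → 0 ≤ T k x y)
    (h4 : ∀ x0 ∈ X0, ∀ y' ∈ XVF, ∀ y'' ∈ XVF,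
      0 ≤ T k x0 y' → 0 ≤ T k y' y'' → T k x0 y'' ≤ T k x0 y' - η) :
    ∀ x : ℕ → X, x 0 ∈ X0 → (∀ t, x (t + 1) ∈ f (x t)) →
      ∃ i : ℕ, ∀ j ≥ i, x j ∉ XVF := by
  intro x hx0 hstep
  by_contra hcon
  push_neg at hcon
  have H : ∀ i : ℕ, ∃ j, i ≤ j ∧ x j ∈ XVF := by
    intro i
    obtain ⟨j, hj, hjv⟩ := hcon i
    exact ⟨j, hj, hjv⟩
  -- Lemma A
  have A : ∀ i, i ≤ k → ∀ t, 0 ≤ T i (x t) (x (t + i + 1)) := by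
    intro i
    induction i with
    | zero => intro _ t; simpa using h1 (x t) (x (t + 1)) (hstep t)
    | succ n ih =>
      intro hle t
      have hn : n < k := by omega
      have := ih (le_of_lt hn) (t + 1)
      have heq : t + 1 + n + 1 = t + (n + 1) + 1 := by omega
      rw [heq] at this
      exact h2 n hn (x t) (x (t + (n + 1) + 1)) (x (t + 1)) (hstep t) this
  -- Lemma B'
  have B' : ∀ d s, 0 ≤ T k (x s) (x (s + k + 1 + d)) := by
    intro d
    induction d with
    | zero => intro s; simpa using A k le_rfl s
    | succ n ih =>
      intro s
      have := ih (s + 1)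
      have heq : s + 1 + k + 1 + n = s + k + 1 + (n + 1) := by omega
      rw [heq] at this
      exact h3 (x s) (x (s + k + 1 + (n + 1))) (x (s + 1)) (hstep s) this
  have B : ∀ s t, s + k + 1 ≤ t → 0 ≤ T k (x s) (x t) := by
    intro s t hst
    have heq : t = s + k + 1 + (t - (s + k + 1)) := by omega
    rw [heq]
    exact B' _ s
  -- construct the sequence of visits
  let g : ℕ → ℕ := fun n => Nat.rec (Classical.choose (H (k + 1)))
    (fun _ prev => Classical.choose (H (prev + k + 1))) n
  have hg0 : k + 1 ≤ g 0 ∧ x (g 0) ∈ XVF := Classical.choose_spec (H (k + 1))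
  have hgs : ∀ n, g n + k + 1 ≤ g (n + 1) ∧ x (g (n + 1)) ∈ XVF := fun n =>
    Classical.choose_spec (H (g n + k + 1))
  have hglb : ∀ n, k + 1 ≤ g n := by
    intro n
    induction n with
    | zero => exact hg0.1
    | succ m ih => have := (hgs m).1; omega
  have hgv : ∀ n, x (g n) ∈ XVF := by
    intro n; cases n with
    | zero => exact hg0.2
    | succ m => exact (hgs m).2
  have hnn : ∀ n, 0 ≤ T k (x 0) (x (g n)) := by
    intro n
    exact B 0 (g n) (by have := hglb n; omega)
  have key : ∀ n : ℕ, T k (x 0) (x (g n)) ≤ T k (x 0) (x (g 0)) - n * η := by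
    intro n
    induction n with
    | zero => simp
    | succ m ih =>
      have h1' := hnn m
      have h2' : 0 ≤ T k (x (g m)) (x (g (m + 1))) :=
        B (g m) (g (m + 1)) (hgs m).1
      have := h4 (x 0) hx0 (x (g m)) (hgv m) (x (g (m + 1))) (hgv (m + 1)) h1' h2'
      push_cast
      push_cast at ih
      linarith
  obtain ⟨n, hn⟩ := exists_nat_gt (T k (x 0) (x (g 0)) / η)
  have := key n
  have := hnn n
  have : (n : ℝ) * η ≤ T k (x 0) (x (g 0)) := by linarith
  have := (div_lt_iff₀ hη).mp hn
  linarith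
end

section
/- Given functions B_0,…,B_{k_b} : X → ℝ satisfying the IBC transition conditions (B_ℓ(x) ≤ 0 → B_{ℓ+1}(x') ≤ 0 for ℓ < k_b and B_{k_b}(x) ≤ 0 → B_{k_b}(x') ≤ 0, for all transitions x' ∈ f(x)), and a trajectory with x k = z satisfying B_ℓ(z) ≤ 0 for some 0 ≤ ℓ ≤ k_b, then for every p = k + (i+1) with i ∈ ℕ one has B_m(x p) ≤ 0 where m = min(k_b, ℓ + i + 1). -/
/-- Stepping lemma: if `B ℓ` is nonpositive at step `k` of a trajectory, then
`B (min kb (ℓ + i + 1))` is nonpositive at step `k + i + 1`. -/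
theorem ibc_stepping {X : Type*} (f : X → Set X) (kb : ℕ) (B : ℕ → X → ℝ)
    (h2 : ∀ ℓ < kb, ∀ x : X, ∀ x' ∈ f x, B ℓ x ≤ 0 → B (ℓ + 1) x' ≤ 0)
    (h3 : ∀ x : X, ∀ x' ∈ f x, B kb x ≤ 0 → B kb x' ≤ 0)
    (x : ℕ → X) (hx : ∀ t, x (t + 1) ∈ f (x t))
    (k ℓ : ℕ) (hℓ : ℓ ≤ kb) (hz : B ℓ (x k) ≤ 0) :
    ∀ i : ℕ, B (min kb (ℓ + i + 1)) (x (k + (i + 1))) ≤ 0 := by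
  intro i
  induction i with
  | zero =>
    rcases lt_or_eq_of_le hℓ with h | h
    · have : min kb (ℓ + 0 + 1) = ℓ + 1 := by omega
      rw [this]
      exact h2 ℓ h (x k) _ (hx k) hz
    · have : min kb (ℓ + 0 + 1) = kb := by omega
      rw [this]
      exact h3 (x k) _ (hx k) (h ▸ hz)
  | succ i ih =>
    rcases lt_or_ge (ℓ + i + 1) kb with h | h
    · have e1 : min kb (ℓ + i + 1) = ℓ + i + 1 := by omega
      have e2 : min kb (ℓ + (i + 1) + 1) = ℓ + i + 1 + 1 := by omega
      rw [e2]
      have := h2 (ℓ + i + 1) h (x (k + (i + 1))) _ (hx (k + (i + 1))) (e1 ▸ ih)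
      have e3 : k + (i + 1 + 1) = k + (i + 1) + 1 := by omega
      rw [e3]
      exact this
    · have e1 : min kb (ℓ + i + 1) = kb := by omega
      have e2 : min kb (ℓ + (i + 1) + 1) = kb := by omega
      rw [e2]
      have := h3 (x (k + (i + 1))) _ (hx (k + (i + 1))) (e1 ▸ ih)
      have e3 : k + (i + 1 + 1) = k + (i + 1) + 1 := by omega
      rw [e3]
      exact this
end
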